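/- For every γ₁ ∈ [0, +∞], every x ∈ S and every q ∈ T*_x S ⊗ T*_x S, the cell formula satisfies Q_{γ₁,+∞}(x, q) = Q_{γ₁,+∞}(x, sym q). -/

import Mathlib

open MeasureTheory Set Filter Topology Matrix
open scoped ENNReal NNReal
noncomputable section

abbrev V2 : Type := Fin 2 → ℝ
abbrev V3 : Type := Fin 3 → ℝ
abbrev M3 : Type := Matrix (Fin 3) (Fin 3) ℝ

/-- An embedded compact connected oriented `C³`-surface (with boundary) in `ℝ³`,
parametrized by a single chart `ξ : ω → ℝ³`, together with its unit normal field `n`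
(extended to the tubular neighbourhood so as to be constant along normal segments) and
the nearest point projection `π` onto the surface.  The curvature of the surface is
small enough that `π` is well defined on the tubular neighbourhood of half-width `1/2`
and `|I + t S(x)| ∈ (1/2, 3/2)` for all `|t| ≤ 1/2`. -/
structure Shell where
  ω : Set V2
  hω_open : IsOpen ω
  hω_bdd : Bornology.IsBounded ω
  hω_conn : IsConnected ω
  ξ : V2 → V3
  hξ : ContDiffOn ℝ 3 ξ (closure ω)
  hξ_inj : Set.InjOn ξ (closure ω)
  hξ_imm : ∀ z ∈ ω, LinearIndependent ℝ
      ![fderiv ℝ ξ z (Pi.single 0 1), fderiv ℝ ξ z (Pi.single 1 1)]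
  n : V3 → V3
  π : V3 → V3
  hn_unit : ∀ z ∈ ω, ∑ i, (n (ξ z) i) ^ 2 = 1
  hn_tangent : ∀ z ∈ ω, ∀ j : Fin 2, ∑ i, n (ξ z) i * fderiv ℝ ξ z (Pi.single j 1) i = 0
  hn_ext : ∀ z ∈ ω, ∀ s : ℝ, |s| < 1 / 2 → n (ξ z + s • n (ξ z)) = n (ξ z)
  hπ_proj : ∀ z ∈ ω, ∀ s : ℝ, |s| < 1 / 2 → π (ξ z + s • n (ξ z)) = ξ z
  hπ_nearest : ∀ z ∈ ω, ∀ s : ℝ, |s| < 1 / 2 → ∀ z' ∈ ω,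
      s ^ 2 ≤ ∑ i, (ξ z i + s * n (ξ z) i - ξ z' i) ^ 2
  hπ_smooth : ContDiffOn ℝ 2 π {p | ∃ z ∈ ω, ∃ s : ℝ, |s| < 1 / 2 ∧ p = ξ z + s • n (ξ z)}
  hn_smooth : ContDiffOn ℝ 2 n {p | ∃ z ∈ ω, ∃ s : ℝ, |s| < 1 / 2 ∧ p = ξ z + s • n (ξ z)}
  hsmall : ∀ z ∈ ω, ∀ s : ℝ, |s| ≤ 1 / 2 →
      ‖(1 : V3 →L[ℝ] V3) + s • fderiv ℝ n (ξ z)‖ ∈ Set.Ioo (1 / 2 : ℝ) (3 / 2)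

namespace Shell
variable (σ : Shell)

/-- The surface `S`. -/
def S : Set V3 := σ.ξ '' σ.ω

/-- The shell (tubular neighbourhood) `S^h` of thickness `h`. -/
def tube (h : ℝ) : Set V3 := {p | ∃ x ∈ σ.S, ∃ s : ℝ, |s| < h / 2 ∧ p = x + s • σ.n x}

/-- The signed distance `t(x) = (x - π(x)) · n(π(x))`. -/
def t (x : V3) : ℝ := ∑ i, (x i - σ.π x i) * σ.n (σ.π x) i

/-- The orthogonal projection `T_S(x) = I - n(x) ⊗ n(x)` onto the tangent plane. -/
def Tproj (x : V3) : M3 := 1 - Matrix.vecMulVec (σ.n x) (σ.n x)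

/-- The (trivially extended) Weingarten map `S(x) = S(x) T_S(x)`, precomposed with `π`:
it is the differential of the extended unit normal, evaluated at `π x`. -/
def SW (x : V3) : M3 := Matrix.of fun i j => fderiv ℝ σ.n (σ.π x) (Pi.single j 1) i

/-- The rescaling diffeomorphism `Θ^h(x) = π(x) + (t(x)/h) n(x)`. -/
def Θ (h : ℝ) (x : V3) : V3 := σ.π x + (σ.t x / h) • σ.n x

end Shell

/-- The gradient of a map `ℝ³ → ℝ³` as a `3 × 3` matrix. -/
def gradm (u : V3 → V3) (x : V3) : M3 := Matrix.of fun i j => fderiv ℝ u x (Pi.single j 1) i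

/-- The symmetric part of a matrix. -/
def msym (M : M3) : M3 := (1 / 2 : ℝ) • (M + Mᵀ)

/-- Squared Frobenius norm. -/
def frob2 (M : M3) : ℝ := ∑ i, ∑ j, (M i j) ^ 2

/-- The symmetric product `a ⊙ b = (a ⊗ b + b ⊗ a)/2`. -/
def odot (a b : V3) : M3 := (1 / 2 : ℝ) • (Matrix.vecMulVec a b + Matrix.vecMulVec b a)

/-- Matrices belonging to `T*_x S ⊗ T*_x S`, i.e. spanned by `τ^α ⊗ τ^β`. -/
def IsTangential (τd : Fin 2 → V3) (q : M3) : Prop :=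
  ∃ c : Matrix (Fin 2) (Fin 2) ℝ,
    q = ∑ a : Fin 2, ∑ b : Fin 2, c a b • Matrix.vecMulVec (τd a) (τd b)

/-- The interval `I = (-1/2, 1/2)`. -/
def Intvl : Set ℝ := Set.Ioo (-(1 / 2) : ℝ) (1 / 2)

/-- The periodicity cell `Y = [0,1)²` of `𝒴 = ℝ²/ℤ²`. -/
def Yc : Set V2 := {y | ∀ i, y i ∈ Set.Ico (0 : ℝ) 1}

/-- `ℤ²`-periodicity. -/
def PerV2 {E : Type*} (f : V2 → E) : Prop := ∀ y, ∀ j : Fin 2, f (y + Pi.single j 1) = f y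

/-- Partial derivative on `ℝ²`. -/
def pd2 (j : Fin 2) (f : V2 → ℝ) (y : V2) : ℝ := fderiv ℝ f y (Pi.single j 1)

/-- The frame `(τ¹, τ², n)`. -/
def frame3 (τd : Fin 2 → V3) (n : V3) : Fin 3 → V3 := ![τd 0, τd 1, n]

/-- `Def_𝒴 ζ = (sym ∇_y ζ)_{αβ} τ^α ⊙ τ^β`. -/
def DefYmat (τd : Fin 2 → V3) (ζ : V2 → V2) (y : V2) : M3 :=
  ∑ a : Fin 2, ∑ b : Fin 2,
    ((pd2 a (fun y' => ζ y' b) y + pd2 b (fun y' => ζ y' a) y) / 2) •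
      Matrix.vecMulVec (τd a) (τd b)

/-- `Def_𝒵 η = (sym (∇_z η | 0))_{ij} τ^i ⊗ τ^j` (with `τ³ = n`). -/
def DefZmat (τ3 : Fin 3 → V3) (η : V2 → V3) (z : V2) : M3 :=
  ∑ i : Fin 3, ∑ j : Fin 3,
    (((if h : (j : ℕ) < 2 then fderiv ℝ (fun z' => η z' i) z (Pi.single (⟨j, h⟩ : Fin 2) 1) else 0)
      + (if h : (i : ℕ) < 2 then fderiv ℝ (fun z' => η z' j) z (Pi.single (⟨i, h⟩ : Fin 2) 1) else 0)) / 2) •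
      Matrix.vecMulVec (τ3 i) (τ3 j)

/-- `Hess_𝒴 φ = (∂_{y_α}∂_{y_β} φ) τ^α ⊙ τ^β`. -/
def HessYmat (τd : Fin 2 → V3) (φ : V2 → ℝ) (y : V2) : M3 :=
  ∑ a : Fin 2, ∑ b : Fin 2, pd2 a (pd2 b φ) y • Matrix.vecMulVec (τd a) (τd b)

/-- Smooth generator on `I × 𝒴`, periodic in `y`. -/
def AdmTY {E : Type*} [NormedAddCommGroup E] [NormedSpace ℝ E] (f : ℝ → V2 → E) : Prop :=
  ContDiff ℝ (⊤ : ℕ∞) (fun p : ℝ × V2 => f p.1 p.2) ∧ ∀ t, PerV2 (f t)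

/-- Smooth generator `η` on `I × 𝒴 × 𝒴`, periodic in `y` and `z`, with zero `z`-average:
a (smooth, dense) element of `L²(I × 𝒴; Ẇ^{1,2}(𝒴; ℝ³))`. -/
def AdmEta (η : ℝ → V2 → V2 → V3) : Prop :=
  ContDiff ℝ (⊤ : ℕ∞) (fun p : ℝ × V2 × V2 => η p.1 p.2.1 p.2.2) ∧
  (∀ t z, PerV2 (fun y => η t y z)) ∧ (∀ t y, PerV2 (fun z => η t y z)) ∧
  ∀ t y, (∫ z in Yc, η t y z) = 0

/-- The relaxation field `𝒰_{γ₁,+∞}(ζ, η, ρ)` for `γ₁ ∈ (0, ∞)`. -/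
def Upos (τd : Fin 2 → V3) (n : V3) (γ₁ : ℝ) (ζ : ℝ → V2 → V2) (ρ : ℝ → V2 → ℝ)
    (η : ℝ → V2 → V2 → V3) (t : ℝ) (y z : V2) : M3 :=
  DefYmat τd (ζ t) y
    + (∑ a : Fin 2, (pd2 a (ρ t) y + γ₁⁻¹ * deriv (fun s => ζ s y a) t) • odot (τd a) n)
    + (γ₁⁻¹ * deriv (fun s => ρ s y) t) • Matrix.vecMulVec n n
    + DefZmat (frame3 τd n) (η t y) z

/-- The relaxation field `𝒰_{+∞,+∞}(ζ, η, ρ, c)`. -/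
def Uinf (τd : Fin 2 → V3) (n : V3) (ζ : ℝ → V2 → V2) (ρ : ℝ → V2 → ℝ)
    (η : ℝ → V2 → V2 → V3) (c : ℝ → V3) (t : ℝ) (y z : V2) : M3 :=
  DefYmat τd (ζ t) y
    + (∑ a : Fin 2, (2 * (pd2 a (ρ t) y + c t a.castSucc)) • odot (τd a) n)
    + c t 2 • Matrix.vecMulVec n n
    + DefZmat (frame3 τd n) (η t y) z

/-- The relaxation field `𝒰_{0,+∞}(ζ, η, φ, μ)`. -/
def U0 (τd : Fin 2 → V3) (n : V3) (ζ : V2 → V2) (η : ℝ → V2 → V2 → V3)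
    (φ : V2 → ℝ) (μ : ℝ → V2 → V3) (t : ℝ) (y z : V2) : M3 :=
  DefYmat τd ζ y
    + (∑ a : Fin 2, (2 * μ t y a.castSucc) • odot (τd a) n)
    + μ t y 2 • Matrix.vecMulVec n n
    - t • HessYmat τd φ y
    + DefZmat (frame3 τd n) (η t y) z

/-- The cell formula `Q_{γ₁,+∞}(x, ·)` for `γ₁ ∈ (0, ∞)`.  (By density, the infimum is
taken over smooth generators of the relaxation spaces.) -/
def QcellPos (Q : V3 → V2 → V2 → M3 → ℝ) (x n : V3) (τd : Fin 2 → V3) (γ₁ : ℝ)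
    (q : M3) : ℝ :=
  sInf {v | ∃ p : M3, IsTangential τd p ∧
    ∃ ζ : ℝ → V2 → V2, ∃ ρ : ℝ → V2 → ℝ, ∃ η : ℝ → V2 → V2 → V3,
      AdmTY ζ ∧ (∫ t in Intvl, ∫ y in Yc, ζ t y) = 0 ∧
      AdmTY ρ ∧ (∫ t in Intvl, ∫ y in Yc, ρ t y) = 0 ∧
      AdmEta η ∧
      v = ∫ t in Intvl, ∫ y in Yc, ∫ z in Yc,
            Q (x + t • n) y z (p + t • q + Upos τd n γ₁ ζ ρ η t y z)}

/-- The cell formula `Q_{+∞,+∞}(x, ·)`. -/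
def QcellInf (Q : V3 → V2 → V2 → M3 → ℝ) (x n : V3) (τd : Fin 2 → V3) (q : M3) : ℝ :=
  sInf {v | ∃ p : M3, IsTangential τd p ∧
    ∃ ζ : ℝ → V2 → V2, ∃ ρ : ℝ → V2 → ℝ, ∃ η : ℝ → V2 → V2 → V3, ∃ c : ℝ → V3,
      AdmTY ζ ∧ (∀ t, (∫ y in Yc, ζ t y) = 0) ∧
      AdmTY ρ ∧ (∀ t, (∫ y in Yc, ρ t y) = 0) ∧
      AdmEta η ∧ ContDiff ℝ (⊤ : ℕ∞) c ∧
      v = ∫ t in Intvl, ∫ y in Yc, ∫ z in Yc,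
            Q (x + t • n) y z (p + t • q + Uinf τd n ζ ρ η c t y z)}

/-- The cell formula `Q_{0,+∞}(x, ·)`. -/
def Qcell0 (Q : V3 → V2 → V2 → M3 → ℝ) (x n : V3) (τd : Fin 2 → V3) (q : M3) : ℝ :=
  sInf {v | ∃ p : M3, IsTangential τd p ∧
    ∃ ζ : V2 → V2, ∃ η : ℝ → V2 → V2 → V3, ∃ φ : V2 → ℝ, ∃ μ : ℝ → V2 → V3,
      ContDiff ℝ (⊤ : ℕ∞) ζ ∧ PerV2 ζ ∧ (∫ y in Yc, ζ y) = 0 ∧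
      AdmEta η ∧
      ContDiff ℝ (⊤ : ℕ∞) φ ∧ PerV2 φ ∧ (∫ y in Yc, φ y) = 0 ∧
      AdmTY μ ∧
      v = ∫ t in Intvl, ∫ y in Yc, ∫ z in Yc,
            Q (x + t • n) y z (p + t • q + U0 τd n ζ η φ μ t y z)}

/-- The cell formula `Q_{γ₁,+∞}` for arbitrary `γ₁ ∈ [0, ∞]`. -/
def QcellAll (Q : V3 → V2 → V2 → M3 → ℝ) (x n : V3) (τd : Fin 2 → V3) (γ₁ : ℝ≥0∞)
    (q : M3) : ℝ :=
  if γ₁ = 0 then Qcell0 Q x n τd q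
  else if γ₁ = ⊤ then QcellInf Q x n τd q
  else QcellPos Q x n τd γ₁.toReal q

/-- The rotation group `SO(3)`. -/
def SO3 : Set M3 := {R | Rᵀ * R = 1 ∧ R.det = 1}

/-- Squared (Frobenius) distance to `SO(3)`. -/
def dist2SO3 (F : M3) : ℝ := sInf ((fun R => frob2 (F - R)) '' SO3)

/-- Admissibility of the stored energy density `W` (Section 4): nonnegative, continuous in
the first variable, `𝒴`-periodic in the second and third variables, vanishing at the
identity, frame indifferent and nondegenerate. -/
def AdmissibleW (T : Set V3) (W : V3 → V2 → V2 → M3 → ℝ) : Prop :=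
  (∀ x y z F, 0 ≤ W x y z F) ∧
  (∀ y z F, ContinuousOn (fun x => W x y z F) T) ∧
  (∀ x y z F, ∀ j : Fin 2,
      W x (y + Pi.single j 1) z F = W x y z F ∧ W x y (z + Pi.single j 1) F = W x y z F) ∧
  (∀ x y z, W x y z 1 = 0) ∧
  (∀ x y z F, ∀ R ∈ SO3, W x y z (R * F) = W x y z F) ∧
  ∃ a b ρ₀ : ℝ, 0 < a ∧ a ≤ b ∧ 0 < ρ₀ ∧
    (∀ x y z F, a * dist2SO3 F ≤ W x y z F) ∧
    (∀ x y z F, dist2SO3 F ≤ ρ₀ → W x y z F ≤ b * dist2SO3 F)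

/-- `Q` is the quadratic form arising in the expansion of `W` at the identity. -/
def QuadExpansion (W Q : V3 → V2 → V2 → M3 → ℝ) : Prop :=
  (∀ x y z, ∃ B : M3 →ₗ[ℝ] M3 →ₗ[ℝ] ℝ, ∀ G, Q x y z G = B G G) ∧
  ∀ δ : ℝ, 0 < δ → ∃ r : ℝ, 0 < r ∧ ∀ G : M3, frob2 G ≤ r →
    ∀ x y z, |W x y z (1 + G) - Q x y z G| ≤ δ * frob2 G

/-- A dual tangent frame `τ^1, τ^2` along the surface (in chart coordinates). -/
def DualFrame (σ : Shell) (τd : V2 → Fin 2 → V3) : Prop :=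
  ∀ z ∈ σ.ω,
    (∀ a b : Fin 2, dotProduct (τd z a) (fderiv ℝ σ.ξ z (Pi.single b 1)) = if a = b then 1 else 0) ∧
    (∀ a : Fin 2, dotProduct (τd z a) (σ.n (σ.ξ z)) = 0)

section AuxStmt10

lemma frob2_nonneg' (M : M3) : 0 ≤ frob2 M :=
  Finset.sum_nonneg fun _ _ => Finset.sum_nonneg fun _ _ => sq_nonneg _

lemma frob2_smul' (c : ℝ) (M : M3) : frob2 (c • M) = c ^ 2 * frob2 M := by
  simp [frob2, Finset.mul_sum, mul_pow]

lemma continuous_frob2' : Continuous (frob2 : M3 → ℝ) := by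
  unfold frob2
  exact continuous_finset_sum _ fun i _ => continuous_finset_sum _ fun j _ =>
    ((continuous_apply j).comp (continuous_apply i)).pow 2

lemma cayley_mem_SO3 (C : M3) (hC : Cᵀ = -C) (h : IsUnit (1 - C).det) :
    (1 - C)⁻¹ * (1 + C) ∈ SO3 := by
  have htr : (1 + C)ᵀ = 1 - C := by
    rw [Matrix.transpose_add, Matrix.transpose_one, hC, sub_eq_add_neg]
  have htr' : (1 - C)ᵀ = 1 + C := by
    rw [Matrix.transpose_sub, Matrix.transpose_one, hC, sub_neg_eq_add]
  have hdet1 : (1 + C).det = (1 - C).det := by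
    rw [← Matrix.det_transpose (1 + C), htr]
  have h2 : IsUnit (1 + C).det := hdet1 ▸ h
  have hcomm : (1 - C) * (1 + C) = (1 + C) * (1 - C) := by noncomm_ring
  constructor
  · have hT : ((1 - C)⁻¹ * (1 + C))ᵀ = (1 - C) * (1 + C)⁻¹ := by
      rw [Matrix.transpose_mul, htr, Matrix.transpose_nonsing_inv, htr']
    rw [hT]
    calc (1 - C) * (1 + C)⁻¹ * ((1 - C)⁻¹ * (1 + C))
        = (1 - C) * ((1 + C)⁻¹ * (1 - C)⁻¹) * (1 + C) := by
          simp only [Matrix.mul_assoc]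
      _ = (1 - C) * ((1 - C)⁻¹ * (1 + C)⁻¹) * (1 + C) := by
          rw [← Matrix.mul_inv_rev, hcomm, Matrix.mul_inv_rev]
      _ = ((1 - C) * (1 - C)⁻¹) * ((1 + C)⁻¹ * (1 + C)) := by
          simp only [Matrix.mul_assoc]
      _ = 1 := by
          rw [Matrix.mul_nonsing_inv _ h, Matrix.nonsing_inv_mul _ h2, Matrix.one_mul]
  · rw [Matrix.det_mul, Matrix.det_nonsing_inv, hdet1, Ring.inverse_mul_cancel _ h]

/-- The Cayley family `1 - (s/2) A`. -/
def cayA (A : M3) (s : ℝ) : M3 := 1 - (s / 2) • A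

/-- The Cayley rotation `(1 - (s/2) A)⁻¹ (1 + (s/2) A)`. -/
def cayR (A : M3) (s : ℝ) : M3 := (cayA A s)⁻¹ * (1 + (s / 2) • A)

/-- The rotated curve `cayR A s * (1 + s G) - 1`. -/
def cayH (A G : M3) (s : ℝ) : M3 := cayR A s * (1 + s • G) - 1

set_option maxHeartbeats 1000000 in
lemma Q_skew_invariant (T : Set V3) (W Q : V3 → V2 → V2 → M3 → ℝ)
    (hW : AdmissibleW T W) (hQ : QuadExpansion W Q) (x : V3) (y z : V2)
    (G A : M3) (hA : Aᵀ = -A) : Q x y z (G + A) = Q x y z G := by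
  obtain ⟨B, hB⟩ := hQ.1 x y z
  -- continuity of the quadratic form
  have hBcont : Continuous fun p : M3 × M3 => B p.1 p.2 := by
    have hu' : ∀ w : M3, w = ∑ i : Fin 3, ∑ j : Fin 3, w i j • Matrix.single i j (1:ℝ) :=
      fun w => (Matrix.matrix_eq_sum_single w).trans (by simp)
    have hrep : ∀ u v : M3, B u v = ∑ k : Fin 3, ∑ l : Fin 3, ∑ i : Fin 3, ∑ j : Fin 3,
        v k l * (u i j *
          B (Matrix.single i j (1:ℝ)) (Matrix.single k l (1:ℝ))) := by
      intro u v
      conv_lhs => rw [hu' u, hu' v]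
      simp only [map_sum, LinearMap.sum_apply, _root_.map_smul, LinearMap.smul_apply,
        smul_eq_mul, Finset.mul_sum]
    have hfn : (fun p : M3 × M3 => B p.1 p.2) = fun p : M3 × M3 =>
        ∑ k : Fin 3, ∑ l : Fin 3, ∑ i : Fin 3, ∑ j : Fin 3,
          p.2 k l * (p.1 i j *
            B (Matrix.single i j (1:ℝ)) (Matrix.single k l (1:ℝ))) := by
      funext p
      exact hrep p.1 p.2
    rw [hfn]
    refine continuous_finset_sum _ fun k _ => continuous_finset_sum _ fun l _ =>
      continuous_finset_sum _ fun i _ => continuous_finset_sum _ fun j _ => ?_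
    exact (continuous_snd.matrix_elem k l).mul
      ((continuous_fst.matrix_elem i j).mul
        continuous_const)
  -- the limit lemma
  have hL : ∀ (M : M3) (H : ℝ → M3),
      Tendsto (fun s => s⁻¹ • H s) (𝓝[≠] (0:ℝ)) (𝓝 M) →
      Tendsto (fun s => W x y z (1 + H s) / s ^ 2) (𝓝[≠] (0:ℝ)) (𝓝 (B M M)) := by
    intro M H hH
    rw [Metric.tendsto_nhds]
    intro ε hε
    have hM1 : (0:ℝ) < frob2 M + 1 := by linarith [frob2_nonneg' M]
    have hδpos : (0:ℝ) < ε / (2 * (frob2 M + 1)) := by positivity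
    obtain ⟨r, hr, hWQ⟩ := hQ.2 (ε / (2 * (frob2 M + 1))) hδpos
    have hne : ∀ᶠ s in 𝓝[≠] (0:ℝ), s ≠ 0 := by
      filter_upwards [eventually_mem_nhdsWithin] with s hs
      simpa using hs
    have e2 : ∀ᶠ s in 𝓝[≠] (0:ℝ), frob2 (s⁻¹ • H s) < frob2 M + 1 :=
      ((continuous_frob2'.tendsto M).comp hH).eventually_lt_const (by linarith)
    have e3 : ∀ᶠ s in 𝓝[≠] (0:ℝ), s ^ 2 * (frob2 M + 1) < r := by
      have ht : Tendsto (fun s : ℝ => s ^ 2 * (frob2 M + 1)) (𝓝 0) (𝓝 0) := by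
        have hc : Continuous (fun s : ℝ => s ^ 2 * (frob2 M + 1)) :=
          (continuous_pow 2).mul continuous_const
        simpa using hc.tendsto 0
      exact (ht.mono_left nhdsWithin_le_nhds).eventually_lt_const hr
    have e4 : ∀ᶠ s in 𝓝[≠] (0:ℝ),
        |B (s⁻¹ • H s) (s⁻¹ • H s) - B M M| < ε / 2 := by
      have ht : Tendsto (fun s => B (s⁻¹ • H s) (s⁻¹ • H s)) (𝓝[≠] (0:ℝ)) (𝓝 (B M M)) :=
        (hBcont.tendsto (M, M)).comp (hH.prodMk_nhds hH)
      have := (Metric.tendsto_nhds.mp ht) (ε / 2) (by positivity)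
      simpa [Real.dist_eq] using this
    filter_upwards [hne, e2, e3, e4] with s hs1 hs2 hs3 hs4
    have hHs : H s = s • (s⁻¹ • H s) := by
      rw [smul_smul, mul_inv_cancel₀ hs1, one_smul]
    have hs2pos : (0:ℝ) < s ^ 2 := by
      have h := abs_pos.mpr hs1
      calc (0:ℝ) < |s| ^ 2 := by positivity
        _ = s ^ 2 := sq_abs s
    have hfr : frob2 (H s) = s ^ 2 * frob2 (s⁻¹ • H s) := by
      conv_lhs => rw [hHs]
      rw [frob2_smul']
    have hfle : frob2 (H s) ≤ r := by
      rw [hfr]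
      have h1 := mul_le_mul_of_nonneg_left hs2.le (sq_nonneg s)
      linarith
    have hWb := hWQ (H s) hfle x y z
    rw [hB] at hWb
    have hBs : B (H s) (H s) = s ^ 2 * B (s⁻¹ • H s) (s⁻¹ • H s) := by
      conv_lhs => rw [hHs]
      simp only [LinearMap.map_smul, LinearMap.smul_apply, smul_eq_mul]
      ring
    rw [Real.dist_eq]
    have hquot : W x y z (1 + H s) / s ^ 2 - B (s⁻¹ • H s) (s⁻¹ • H s)
        = (W x y z (1 + H s) - B (H s) (H s)) / s ^ 2 := by
      rw [hBs, sub_div, mul_div_cancel_left₀ _ (ne_of_gt hs2pos)]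
    have hδval : ε / (2 * (frob2 M + 1)) * (frob2 M + 1) = ε / 2 := by
      rw [div_mul_eq_mul_div, eq_div_iff (by norm_num : (2:ℝ) ≠ 0), div_mul_eq_mul_div,
        eq_comm, mul_comm, eq_div_iff (by positivity : (2 * (frob2 M + 1) : ℝ) ≠ 0)]
      ring
    have habs : |W x y z (1 + H s) / s ^ 2 - B (s⁻¹ • H s) (s⁻¹ • H s)| ≤ ε / 2 := by
      rw [hquot, abs_div, abs_of_pos hs2pos, div_le_iff₀ hs2pos]
      calc |W x y z (1 + H s) - B (H s) (H s)|
          ≤ ε / (2 * (frob2 M + 1)) * frob2 (H s) := hWb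
        _ = ε / (2 * (frob2 M + 1)) * (s ^ 2 * frob2 (s⁻¹ • H s)) := by rw [hfr]
        _ ≤ ε / (2 * (frob2 M + 1)) * (s ^ 2 * (frob2 M + 1)) := by
            have h1 := mul_le_mul_of_nonneg_left hs2.le (sq_nonneg s)
            nlinarith
        _ = (ε / (2 * (frob2 M + 1)) * (frob2 M + 1)) * s ^ 2 := by ring
        _ = ε / 2 * s ^ 2 := by rw [hδval]
    calc |W x y z (1 + H s) / s ^ 2 - B M M|
        ≤ |W x y z (1 + H s) / s ^ 2 - B (s⁻¹ • H s) (s⁻¹ • H s)|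
          + |B (s⁻¹ • H s) (s⁻¹ • H s) - B M M| := abs_sub_le _ _ _
      _ < ε / 2 + ε / 2 := add_lt_add_of_le_of_lt habs hs4
      _ = ε := by ring
  have hne : ∀ᶠ s in 𝓝[≠] (0:ℝ), s ≠ 0 := by
    filter_upwards [eventually_mem_nhdsWithin] with s hs
    simpa using hs
  -- curve 1 : straight line
  have h1 : Tendsto (fun s => W x y z (1 + s • G) / s ^ 2) (𝓝[≠] (0:ℝ)) (𝓝 (B G G)) := by
    apply hL
    have heq : (fun _ : ℝ => G) =ᶠ[𝓝[≠] (0:ℝ)] fun s => s⁻¹ • (s • G) := by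
      filter_upwards [hne] with s hs
      rw [smul_smul, inv_mul_cancel₀ hs, one_smul]
    exact Tendsto.congr' heq tendsto_const_nhds
  -- curve 2 : the Cayley-rotated line
  have hBmcont : Continuous (cayA A) := by
    unfold cayA
    exact continuous_const.sub ((continuous_id.div_const 2).smul continuous_const)
  have hBm0 : cayA A 0 = 1 := by simp [cayA]
  have hdet : Tendsto (fun s => (cayA A s).det) (𝓝 (0:ℝ)) (𝓝 1) := by
    have := hBmcont.matrix_det.tendsto 0
    simpa [hBm0] using this
  have edet : ∀ᶠ s in 𝓝 (0:ℝ), IsUnit (cayA A s).det := by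
    filter_upwards [hdet.eventually_ne one_ne_zero] with s hs
    exact isUnit_iff_ne_zero.mpr hs
  have hadj : Tendsto (fun s => (cayA A s).adjugate) (𝓝 (0:ℝ)) (𝓝 (1:M3)) := by
    have := hBmcont.matrix_adjugate.tendsto 0
    simpa [hBm0, Matrix.adjugate_one] using this
  have hinv : Tendsto (fun s => (cayA A s)⁻¹) (𝓝 (0:ℝ)) (𝓝 1) := by
    have hsf : Tendsto (fun s => ((cayA A s).det)⁻¹ • (cayA A s).adjugate) (𝓝 (0:ℝ))
        (𝓝 ((1:ℝ)⁻¹ • (1:M3))) := (hdet.inv₀ one_ne_zero).smul hadj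
    have hcongr : ∀ s : ℝ, ((cayA A s).det)⁻¹ • (cayA A s).adjugate = (cayA A s)⁻¹ := by
      intro s
      rw [Matrix.inv_def, Ring.inverse_eq_inv]
    simpa [hcongr] using hsf
  have hRt : Tendsto (cayR A) (𝓝 (0:ℝ)) (𝓝 1) := by
    have h2 : Tendsto (fun s : ℝ => (1:M3) + (s / 2) • A) (𝓝 0) (𝓝 (1:M3)) := by
      have : Continuous fun s : ℝ => (1:M3) + (s / 2) • A :=
        continuous_const.add ((continuous_id.div_const 2).smul continuous_const)
      simpa using this.tendsto 0
    have := hinv.mul h2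
    rw [mul_one] at this
    exact this
  have hform : ∀ᶠ s in 𝓝[≠] (0:ℝ),
      s⁻¹ • cayH A G s = (cayA A s)⁻¹ * A + cayR A s * G := by
    filter_upwards [hne, edet.filter_mono nhdsWithin_le_nhds] with s hs hdu
    have hRm1 : cayR A s - 1 = s • ((cayA A s)⁻¹ * A) := by
      calc cayR A s - 1
          = (cayA A s)⁻¹ * (1 + (s / 2) • A) - (cayA A s)⁻¹ * cayA A s := by
            rw [Matrix.nonsing_inv_mul _ hdu]; rfl
        _ = (cayA A s)⁻¹ * ((1 + (s / 2) • A) - cayA A s) := by rw [Matrix.mul_sub]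
        _ = (cayA A s)⁻¹ * (s • A) := by
            congr 1
            show (1 + (s / 2) • A) - (1 - (s / 2) • A) = s • A
            have hhalf : (s / 2 : ℝ) + s / 2 = s := by ring
            calc (1 + (s / 2) • A) - (1 - (s / 2) • A)
                = (s / 2) • A + (s / 2) • A := by abel
              _ = (s / 2 + s / 2) • A := (add_smul _ _ _).symm
              _ = s • A := by rw [hhalf]
        _ = s • ((cayA A s)⁻¹ * A) := by rw [Matrix.mul_smul]
    have hH2s : cayH A G s = s • ((cayA A s)⁻¹ * A) + s • (cayR A s * G) := by
      calc cayH A G s = (cayR A s - 1) + cayR A s * (s • G) := by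
            show cayR A s * (1 + s • G) - 1 = _
            rw [Matrix.mul_add, Matrix.mul_one]
            abel
        _ = s • ((cayA A s)⁻¹ * A) + s • (cayR A s * G) := by
            rw [hRm1, Matrix.mul_smul]
    rw [hH2s, smul_add, smul_smul, smul_smul, inv_mul_cancel₀ hs, one_smul, one_smul]
  have hg2 : Tendsto (fun s => s⁻¹ • cayH A G s) (𝓝[≠] (0:ℝ)) (𝓝 (A + G)) := by
    have hlim : Tendsto (fun s => (cayA A s)⁻¹ * A + cayR A s * G) (𝓝 (0:ℝ))
        (𝓝 ((1:M3) * A + (1:M3) * G)) :=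
      (hinv.mul tendsto_const_nhds).add (hRt.mul tendsto_const_nhds)
    have h2 := hlim.mono_left (nhdsWithin_le_nhds (s := {(0:ℝ)}ᶜ))
    refine Tendsto.congr' (EventuallyEq.symm hform) ?_
    simpa using h2
  have h2 : Tendsto (fun s => W x y z (1 + cayH A G s) / s ^ 2) (𝓝[≠] (0:ℝ))
      (𝓝 (B (A + G) (A + G))) := hL (A + G) (cayH A G) hg2
  have heqW : (fun s => W x y z (1 + cayH A G s) / s ^ 2)
      =ᶠ[𝓝[≠] (0:ℝ)] (fun s => W x y z (1 + s • G) / s ^ 2) := by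
    filter_upwards [edet.filter_mono nhdsWithin_le_nhds] with s hdu
    have hCt : ((s / 2) • A)ᵀ = -((s / 2) • A) := by
      rw [Matrix.transpose_smul, hA, smul_neg]
    have hRSO : cayR A s ∈ SO3 := cayley_mem_SO3 ((s / 2) • A) hCt hdu
    have h1H : (1 : M3) + cayH A G s = cayR A s * (1 + s • G) := by
      show (1 : M3) + (cayR A s * (1 + s • G) - 1) = _
      abel
    rw [h1H, hW.2.2.2.2.1 x y z (1 + s • G) (cayR A s) hRSO]
  have hfin : B (A + G) (A + G) = B G G := tendsto_nhds_unique (h2.congr' heqW) h1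
  rw [hB, hB, add_comm G A, hfin]

end AuxStmt10

/-- For every `γ₁ ∈ [0, +∞]`, every `x ∈ S` and every
`q ∈ T*_x S ⊗ T*_x S`, the cell formula satisfies
`Q_{γ₁,+∞}(x, q) = Q_{γ₁,+∞}(x, sym q)`. -/
theorem stmt_10 (σ : Shell) (W Q : V3 → V2 → V2 → M3 → ℝ)
    (hW : AdmissibleW (σ.tube 1) W) (hQ : QuadExpansion W Q)
    (τd : V2 → Fin 2 → V3) (hτd : DualFrame σ τd) :
    ∀ γ₁ : ℝ≥0∞, ∀ z ∈ σ.ω, ∀ q : M3, IsTangential (τd z) q →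
      QcellAll Q (σ.ξ z) (σ.n (σ.ξ z)) (τd z) γ₁ q =
        QcellAll Q (σ.ξ z) (σ.n (σ.ξ z)) (τd z) γ₁ (msym q) := by
  intro γ₁ z hz q hq
  have hrw : ∀ (x' : V3) (y' z' : V2) (p X : M3) (t : ℝ),
      Q x' y' z' (p + t • q + X) = Q x' y' z' (p + t • msym q + X) := by
    intro x' y' z' p X t
    have hskew : (t • (q - msym q))ᵀ = -(t • (q - msym q)) := by
      have h1 : (q - msym q)ᵀ = -(q - msym q) := by
        ext i j
        simp [msym, Matrix.transpose_apply, Matrix.sub_apply, Matrix.add_apply,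
          Matrix.neg_apply, Matrix.smul_apply, smul_eq_mul]
        ring
      rw [Matrix.transpose_smul, h1, smul_neg]
    have hdecomp : p + t • q + X = (p + t • msym q + X) + t • (q - msym q) := by
      rw [smul_sub]
      abel
    rw [hdecomp, Q_skew_invariant (σ.tube 1) W Q hW hQ _ _ _ _ _ hskew]
  unfold QcellAll Qcell0 QcellInf QcellPos
  split_ifs <;> simp only [hrw]
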